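/- Let b < 0 and h : [0,∞) → ℝ continuous with |h(r)| ≤ (1/2)(√(-b)·coth(√(-b)·r) − √(-b)) for all r > 0, and let W(t) = sinh(√(-b)t)/(√(-b)·e^{2∫₀ᵗ h(s)ds}). Then W(t) → ∞ as t → ∞, q_W(t) = (∫₀ᵗ W)/W(t) → 1/√(-b) as t → ∞, and q_W(t) → 0 as t → 0⁺. -/

import Mathlib

/-!
Write `c = √(-b)` and `P t = ∫₀ᵗ h`, so that `(log W)' = c coth (c t) - 2 h`. The bound on `|h|`
puts this between `c` and `2 c coth (c t) - c`, the logarithmic derivatives of `e^{c t}` and of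
`sinh² (c t) e^{-c t}`. Hence `e^{-c t} W` is nondecreasing and `e^{c t} W / sinh² (c t)` is
nonincreasing, which pins `W s` between explicit multiples of `W t` for `s ≤ t`. Integrating,
`(1 - e^{-c t}) (1 - 2 e^{-c t}) / c ≤ (∫₀ᵗ W) / W t ≤ (1 - e^{-c t}) / c`, and both bounds give the
limits; `W t ≥ e^{c (t - 1)} W 1` gives the growth of `W`.
-/

open Real Filter Set Topology intervalIntegral

lemma monotoneOn_Ioi_of_hasDerivAt_nonneg {f f' : ℝ → ℝ} {a : ℝ}
    (hf : ∀ x > a, HasDerivAt f (f' x) x) (hf' : ∀ x > a, 0 ≤ f' x) : MonotoneOn f (Ioi a) :=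
  monotoneOn_of_hasDerivWithinAt_nonneg (convex_Ioi a)
    (fun x hx ↦ (hf x hx).continuousAt.continuousWithinAt)
    (fun x hx ↦ (hf x (by simpa using hx)).hasDerivWithinAt)
    (fun x hx ↦ hf' x (by simpa using hx))

lemma hasDerivAt_integral_of_continuousOn_Ici {h : ℝ → ℝ} {a x : ℝ}
    (hcont : ContinuousOn h (Ici a)) (hx : a < x) :
    HasDerivAt (fun t ↦ ∫ s in a..t, h s) (h x) x :=
  integral_hasDerivAt_right
    (hcont.mono (by simp [uIcc_of_le hx.le, Icc_subset_Ici_self])).intervalIntegrable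
    ((hcont.mono Ioi_subset_Ici_self).stronglyMeasurableAtFilter isOpen_Ioi x hx)
    (hcont.continuousAt (Ici_mem_nhds hx))

lemma continuousOn_integral_of_continuousOn_Ici {h : ℝ → ℝ} {a : ℝ}
    (hcont : ContinuousOn h (Ici a)) : ContinuousOn (fun t ↦ ∫ s in a..t, h s) (Ici a) := by
  intro x hx
  have hsub : uIcc a (x + 1) ⊆ Ici a := by
    simp [uIcc_of_le (show a ≤ x + 1 by linarith [mem_Ici.mp hx]), Icc_subset_Ici_self]
  refine (continuousOn_primitive_interval' (hcont.mono hsub).intervalIntegrable left_mem_uIcc x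
    (Icc_subset_uIcc ⟨hx, by linarith⟩)).mono_of_mem_nhdsWithin ?_
  refine mem_nhdsWithin.mpr ⟨Iio (x + 1), isOpen_Iio, by simp, fun y hy ↦ ?_⟩
  exact Icc_subset_uIcc ⟨hy.2, hy.1.le⟩

lemma hasDerivAt_log_sinh_mul_sub {c x : ℝ} (hcx : 0 < c * x) :
    HasDerivAt (fun y ↦ log (sinh (c * y)) - c * y)
      (c * (cosh (c * x) / sinh (c * x)) - c) x := by
  have hlin : HasDerivAt (fun y ↦ c * y) c x := by simpa using (hasDerivAt_id x).const_mul c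
  refine ((((hasDerivAt_sinh (c * x)).comp x hlin).log (sinh_pos_iff.mpr hcx).ne').sub
    hlin).congr_deriv ?_
  simp only [Function.comp_apply]
  ring

lemma exp_sub_sub_le_exp_sub_mul_sinh_div_sq {x y : ℝ} (hx : 0 < x) (hxy : x ≤ y) :
    exp (x - y) - 2 * exp (-y) * exp (-x) ≤ exp (y - x) * (sinh x / sinh y) ^ 2 := by
  -- the right side is `eˣ⁻ʸ ((1 - e⁻²ˣ) / (1 - e⁻²ʸ))² ≥ eˣ⁻ʸ (1 - e⁻²ˣ)² ≥ eˣ⁻ʸ (1 - 2 e⁻²ˣ)`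
  have ha : 1 < exp x := one_lt_exp_iff.mpr hx
  have hab : exp x ≤ exp y := exp_le_exp.mpr hxy
  rw [sinh_eq, sinh_eq, exp_sub, exp_sub, exp_neg, exp_neg]
  set a := exp x
  set B := exp y
  have hB : 1 < B := ha.trans_le hab
  have hB2 : 0 < B ^ 2 - 1 := by nlinarith
  rw [div_pow, div_pow]
  field_simp
  nlinarith [mul_le_mul_of_nonneg_left (show (B ^ 2 - 1) ^ 2 ≤ B ^ 4 by nlinarith)
    (sq_nonneg (a ^ 2 - 1)), sq_nonneg (B ^ 2 - 1)]

lemma integral_exp_mul (a b : ℝ) {c : ℝ} (hc : c ≠ 0) :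
    ∫ s in a..b, exp (c * s) = (exp (c * b) - exp (c * a)) / c := by
  simp [integral_comp_mul_left (fun s ↦ exp s), hc, div_eq_inv_mul]

lemma integral_exp_mul_sub_right {c : ℝ} (hc : c ≠ 0) (t : ℝ) :
    ∫ s in (0 : ℝ)..t, exp (c * (s - t)) = (1 - exp (-(c * t))) / c := by
  rw [integral_comp_sub_right (fun s ↦ exp (c * s)), integral_exp_mul _ _ hc]
  simp

lemma integral_exp_neg_mul {c : ℝ} (hc : c ≠ 0) (t : ℝ) :
    ∫ s in (0 : ℝ)..t, exp (-(c * s)) = (1 - exp (-(c * t))) / c := by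
  simp_rw [← neg_mul]
  rw [integral_exp_mul _ _ (neg_ne_zero.mpr hc)]
  field_simp
  simp

noncomputable def warping (c : ℝ) (P : ℝ → ℝ) (t : ℝ) : ℝ := sinh (c * t) / (c * exp (2 * P t))

section warping

variable {c : ℝ} {P : ℝ → ℝ} {s t : ℝ}

@[simp] lemma warping_zero : warping c P 0 = 0 := by simp [warping]

lemma warping_pos (hc : 0 < c) (ht : 0 < t) : 0 < warping c P t :=
  div_pos (sinh_pos_iff.mpr (mul_pos hc ht)) (by positivity)

lemma warping_nonneg (hc : 0 < c) (ht : 0 ≤ t) : 0 ≤ warping c P t := by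
  obtain rfl | ht := ht.eq_or_lt
  · simp
  · exact (warping_pos hc ht).le

lemma exp_neg_mul_warping (hc : 0 < c) (ht : 0 < t) :
    exp (-(c * t)) * warping c P t = exp (log (sinh (c * t)) - c * t - 2 * P t) / c := by
  rw [exp_sub, exp_sub, exp_log (sinh_pos_iff.mpr (mul_pos hc ht)), exp_neg, warping]
  field_simp

lemma exp_mul_warping_div_sinh_sq (hc : 0 < c) (ht : 0 < t) :
    exp (c * t) * warping c P t / sinh (c * t) ^ 2
      = exp (-(log (sinh (c * t)) - c * t + 2 * P t)) / c := by
  rw [neg_add, exp_add, neg_sub, exp_sub, exp_log (sinh_pos_iff.mpr (mul_pos hc ht)), exp_neg,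
    warping]
  field_simp

lemma intervalIntegrable_warping (hc : c ≠ 0) (hPc : ContinuousOn P (Ici 0)) (ht : 0 ≤ t) :
    IntervalIntegrable (warping c P) MeasureTheory.volume 0 t := by
  have hPc' : ContinuousOn P (uIcc 0 t) :=
    hPc.mono (by simp [uIcc_of_le ht, Icc_subset_Ici_self])
  refine ContinuousOn.intervalIntegrable ?_
  exact (continuous_sinh.comp (continuous_const_mul c)).continuousOn.div
    (continuousOn_const.mul (continuous_exp.comp_continuousOn (continuousOn_const.mul hPc')))
    fun _ _ ↦ by positivity

variable {p : ℝ → ℝ} (hc : 0 < c) (hP : ∀ x > 0, HasDerivAt P (p x) x)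
  (hp : ∀ x > 0, |p x| ≤ 1 / 2 * (c * (cosh (c * x) / sinh (c * x)) - c))
include hc hP hp

lemma monotoneOn_exp_neg_mul_warping :
    MonotoneOn (fun t ↦ exp (-(c * t)) * warping c P t) (Ioi 0) := by
  have hmono : MonotoneOn (fun t ↦ log (sinh (c * t)) - c * t - 2 * P t) (Ioi 0) :=
    monotoneOn_Ioi_of_hasDerivAt_nonneg
      (fun x hx ↦ (hasDerivAt_log_sinh_mul_sub (mul_pos hc hx)).sub ((hP x hx).const_mul 2))
      (fun x hx ↦ by linarith [le_abs_self (p x), hp x hx])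
  intro s hs t ht hst
  simp only [exp_neg_mul_warping hc hs, exp_neg_mul_warping hc ht]
  exact div_le_div_of_nonneg_right (exp_le_exp.mpr (hmono hs ht hst)) hc.le

lemma antitoneOn_exp_mul_warping_div_sinh_sq :
    AntitoneOn (fun t ↦ exp (c * t) * warping c P t / sinh (c * t) ^ 2) (Ioi 0) := by
  have hmono : MonotoneOn (fun t ↦ log (sinh (c * t)) - c * t + 2 * P t) (Ioi 0) :=
    monotoneOn_Ioi_of_hasDerivAt_nonneg
      (fun x hx ↦ (hasDerivAt_log_sinh_mul_sub (mul_pos hc hx)).add ((hP x hx).const_mul 2))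
      (fun x hx ↦ by linarith [neg_abs_le (p x), hp x hx])
  intro s hs t ht hst
  simp only [exp_mul_warping_div_sinh_sq hc hs, exp_mul_warping_div_sinh_sq hc ht]
  exact div_le_div_of_nonneg_right (exp_le_exp.mpr (neg_le_neg (hmono hs ht hst))) hc.le

lemma warping_le_exp_mul_warping (hs : 0 ≤ s) (hst : s ≤ t) :
    warping c P s ≤ exp (c * (s - t)) * warping c P t := by
  obtain rfl | hs := hs.eq_or_lt
  · rw [warping_zero]
    exact mul_nonneg (exp_pos _).le (warping_nonneg hc hst)
  calc warping c P s = exp (c * s) * (exp (-(c * s)) * warping c P s) := by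
        rw [← mul_assoc, ← exp_add, add_neg_cancel, exp_zero, one_mul]
    _ ≤ exp (c * s) * (exp (-(c * t)) * warping c P t) :=
        mul_le_mul_of_nonneg_left
          (monotoneOn_exp_neg_mul_warping hc hP hp hs (hs.trans_le hst) hst) (exp_pos _).le
    _ = exp (c * (s - t)) * warping c P t := by rw [← mul_assoc, ← exp_add]; ring_nf

lemma exp_sub_mul_warping_le_warping (hs : 0 ≤ s) (hst : s ≤ t) :
    (exp (c * (s - t)) - 2 * exp (-(c * t)) * exp (-(c * s))) * warping c P t
      ≤ warping c P s := by
  obtain rfl | hs := hs.eq_or_lt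
  · rw [warping_zero, mul_zero, neg_zero, exp_zero, mul_one, zero_sub, mul_neg]
    nlinarith [exp_pos (-(c * t)), warping_nonneg (P := P) hc hst]
  have hcs := mul_pos hc hs
  have hct := hs.trans_le hst
  calc (exp (c * (s - t)) - 2 * exp (-(c * t)) * exp (-(c * s))) * warping c P t
      ≤ exp (c * t - c * s) * (sinh (c * s) / sinh (c * t)) ^ 2 * warping c P t := by
        rw [mul_sub]
        exact mul_le_mul_of_nonneg_right
          (exp_sub_sub_le_exp_sub_mul_sinh_div_sq hcs (by gcongr)) (warping_nonneg hc hct.le)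
    _ = exp (-(c * s)) * sinh (c * s) ^ 2
          * (exp (c * t) * warping c P t / sinh (c * t) ^ 2) := by
        rw [exp_sub, exp_neg]
        field_simp
    _ ≤ exp (-(c * s)) * sinh (c * s) ^ 2
          * (exp (c * s) * warping c P s / sinh (c * s) ^ 2) :=
        mul_le_mul_of_nonneg_left
          (antitoneOn_exp_mul_warping_div_sinh_sq hc hP hp hs hct hst) (by positivity)
    _ = warping c P s := by
        rw [exp_neg]
        field_simp

lemma tendsto_warping_atTop : Tendsto (warping c P) atTop atTop := by
  have hexp : Tendsto (fun t ↦ exp (c * (t + -1))) atTop atTop := tendsto_exp_atTop.comp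
    ((tendsto_atTop_add_const_right atTop (-1) tendsto_id).const_mul_atTop hc)
  refine tendsto_atTop_mono' atTop ?_ (hexp.atTop_mul_const (warping_pos (P := P) hc one_pos))
  filter_upwards [eventually_ge_atTop 1] with t ht
  calc exp (c * (t + -1)) * warping c P 1
      ≤ exp (c * (t + -1)) * (exp (c * (1 - t)) * warping c P t) :=
        mul_le_mul_of_nonneg_left (warping_le_exp_mul_warping hc hP hp zero_le_one ht)
          (exp_pos _).le
    _ = warping c P t := by rw [← mul_assoc, ← exp_add]; ring_nf; simp

variable (hPc : ContinuousOn P (Ici 0))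
include hPc

lemma integral_warping_le (ht : 0 ≤ t) :
    ∫ s in (0 : ℝ)..t, warping c P s ≤ (1 - exp (-(c * t))) / c * warping c P t := by
  calc ∫ s in (0 : ℝ)..t, warping c P s
      ≤ ∫ s in (0 : ℝ)..t, exp (c * (s - t)) * warping c P t :=
        integral_mono_on ht (intervalIntegrable_warping hc.ne' hPc ht)
          (Continuous.intervalIntegrable (by fun_prop) _ _)
          fun s hs ↦ warping_le_exp_mul_warping hc hP hp hs.1 hs.2
    _ = (1 - exp (-(c * t))) / c * warping c P t := by
        rw [integral_mul_const, integral_exp_mul_sub_right hc.ne']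

lemma le_integral_warping (ht : 0 ≤ t) :
    (1 - exp (-(c * t))) / c * (1 - 2 * exp (-(c * t))) * warping c P t
      ≤ ∫ s in (0 : ℝ)..t, warping c P s := by
  calc (1 - exp (-(c * t))) / c * (1 - 2 * exp (-(c * t))) * warping c P t
      = ∫ s in (0 : ℝ)..t,
          (exp (c * (s - t)) - 2 * exp (-(c * t)) * exp (-(c * s))) * warping c P t := by
        rw [integral_mul_const, integral_sub (Continuous.intervalIntegrable (by fun_prop) _ _)
          (Continuous.intervalIntegrable (by fun_prop) _ _), integral_const_mul,
          integral_exp_mul_sub_right hc.ne', integral_exp_neg_mul hc.ne']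
        ring
    _ ≤ ∫ s in (0 : ℝ)..t, warping c P s :=
        integral_mono_on ht (Continuous.intervalIntegrable (by fun_prop) _ _)
          (intervalIntegrable_warping hc.ne' hPc ht)
          fun s hs ↦ exp_sub_mul_warping_le_warping hc hP hp hs.1 hs.2

lemma integral_warping_div_le (ht : 0 < t) :
    (∫ s in (0 : ℝ)..t, warping c P s) / warping c P t ≤ (1 - exp (-(c * t))) / c :=
  (div_le_iff₀ (warping_pos hc ht)).mpr (integral_warping_le hc hP hp hPc ht.le)

lemma le_integral_warping_div (ht : 0 < t) :
    (1 - exp (-(c * t))) / c * (1 - 2 * exp (-(c * t)))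
      ≤ (∫ s in (0 : ℝ)..t, warping c P s) / warping c P t :=
  (le_div_iff₀ (warping_pos hc ht)).mpr (le_integral_warping hc hP hp hPc ht.le)

lemma tendsto_integral_warping_div_atTop :
    Tendsto (fun t ↦ (∫ s in (0 : ℝ)..t, warping c P s) / warping c P t) atTop (𝓝 (1 / c)) := by
  have he : Tendsto (fun t ↦ exp (-(c * t))) atTop (𝓝 0) :=
    tendsto_exp_neg_atTop_nhds_zero.comp (tendsto_id.const_mul_atTop hc)
  have hup : Tendsto (fun t ↦ (1 - exp (-(c * t))) / c) atTop (𝓝 (1 / c)) := by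
    simpa using (he.const_sub 1).div_const c
  have hlow : Tendsto (fun t ↦ (1 - exp (-(c * t))) / c * (1 - 2 * exp (-(c * t)))) atTop
      (𝓝 (1 / c)) := by
    simpa using hup.mul ((he.const_mul 2).const_sub 1)
  refine tendsto_of_tendsto_of_tendsto_of_le_of_le' hlow hup ?_ ?_ <;>
    filter_upwards [eventually_gt_atTop 0] with t ht
  exacts [le_integral_warping_div hc hP hp hPc ht, integral_warping_div_le hc hP hp hPc ht]

lemma tendsto_integral_warping_div_nhdsGT_zero :
    Tendsto (fun t ↦ (∫ s in (0 : ℝ)..t, warping c P s) / warping c P t) (𝓝[>] 0) (𝓝 0) := by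
  have hup : Tendsto (fun t ↦ (1 - exp (-(c * t))) / c) (𝓝[>] 0) (𝓝 0) := by
    have hcont : Continuous fun t ↦ (1 - exp (-(c * t))) / c := by fun_prop
    simpa using (hcont.tendsto 0).mono_left nhdsWithin_le_nhds
  refine tendsto_of_tendsto_of_tendsto_of_le_of_le' tendsto_const_nhds hup ?_ ?_ <;>
    filter_upwards [self_mem_nhdsWithin] with t (ht : 0 < t)
  · exact div_nonneg (integral_nonneg ht.le fun s hs ↦ warping_nonneg hc hs.1)
      (warping_nonneg hc ht.le)
  · exact integral_warping_div_le hc hP hp hPc ht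

end warping

theorem stmt_4 (b : ℝ) (hb : b < 0) (h : ℝ → ℝ)
    (hcont : ContinuousOn h (Set.Ici 0))
    (hbal : ∀ r > 0, |h r| ≤ (1 / 2) *
      (Real.sqrt (-b) * (Real.cosh (Real.sqrt (-b) * r) / Real.sinh (Real.sqrt (-b) * r))
        - Real.sqrt (-b)))
    (W : ℝ → ℝ)
    (hW : ∀ t, W t = Real.sinh (Real.sqrt (-b) * t) /
      (Real.sqrt (-b) * Real.exp (2 * ∫ s in (0:ℝ)..t, h s))) :
    Filter.Tendsto W Filter.atTop Filter.atTop ∧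
    Filter.Tendsto (fun t => (∫ s in (0:ℝ)..t, W s) / W t) Filter.atTop
      (nhds (1 / Real.sqrt (-b))) ∧
    Filter.Tendsto (fun t => (∫ s in (0:ℝ)..t, W s) / W t) (nhdsWithin 0 (Set.Ioi 0))
      (nhds 0) := by
  have hc : 0 < √(-b) := sqrt_pos.mpr (neg_pos.mpr hb)
  have hP (x : ℝ) (hx : 0 < x) := hasDerivAt_integral_of_continuousOn_Ici hcont hx
  have hPc := continuousOn_integral_of_continuousOn_Ici hcont
  obtain rfl : W = warping √(-b) (fun t ↦ ∫ s in (0 : ℝ)..t, h s) := funext hW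
  exact ⟨tendsto_warping_atTop hc hP hbal, tendsto_integral_warping_div_atTop hc hP hbal hPc,
    tendsto_integral_warping_div_nhdsGT_zero hc hP hbal hPc⟩
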